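/- arXiv:2305.11843 — 2 statements merged into one kernel-verified Lean document; each statement's English description precedes it below -/
import Mathlib

section
/- Let K be an n-maniplex, let M be an (n+1)-maniplex with monodromies m_0, …, m_n, and let G be a group. Then M is a Cayley extension of K by G — that is, every facet of M (an orbit of ⟨m_0, …, m_{n−1}⟩, equipped with the restricted monodromies m_0, …, m_{n−1}) is isomorphic to K, and some subgroup of Aut(M) isomorphic to G acts freely and transitively on the set of facets of M — if and only if there exist a Cayley extender (K, r_n, ξ) with voltage group G whose derived graph is an (n+1)-maniplex, and an isomorphism of (n+1)-maniplexes between M and K_{r_n}^ξ. -/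
/-! ## Basic notions: maniplexes, premaniplexes, orbits, automorphisms -/

/-- One monodromy step using an index satisfying `P`. -/
def StepOn {K : Type*} {n : ℕ} (r : Fin n → K → K) (P : Fin n → Prop) (x y : K) : Prop :=
  ∃ i, P i ∧ r i x = y

/-- `y` is reachable from `x` by monodromies whose index satisfies `P`;
this is the orbit relation of the subgroup generated by those monodromies. -/
def ReachOn {K : Type*} {n : ℕ} (r : Fin n → K → K) (P : Fin n → Prop) : K → K → Prop :=
  Relation.ReflTransGen (StepOn r P)

/-- Orbit relation of the full monodromy group. -/
def ConnRel {K : Type*} {n : ℕ} (r : Fin n → K → K) : K → K → Prop :=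
  ReachOn r fun _ => True

/-- Same facet: orbit relation of `r_0, …, r_{n-2}`. -/
def FacetRel {K : Type*} {n : ℕ} (r : Fin n → K → K) : K → K → Prop :=
  ReachOn r fun i => (i : ℕ) + 1 < n

/-- Same vertex: orbit relation of `r_1, …, r_{n-1}`. -/
def VertexRel {K : Type*} {n : ℕ} (r : Fin n → K → K) : K → K → Prop :=
  ReachOn r fun i => 1 ≤ (i : ℕ)

/-- An `n`-maniplex on the flag set `K`, given by its monodromies `r_0, …, r_{n-1}`. -/
structure IsManiplex {K : Type*} (n : ℕ) (r : Fin n → K → K) : Prop where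
  nonempty : Nonempty K
  invol : ∀ i, Function.Involutive (r i)
  fixfree : ∀ (i : Fin n) (x : K), r i x ≠ x
  fixfree₂ : ∀ (i j : Fin n), i ≠ j → ∀ x : K, r i (r j x) ≠ x
  sq : ∀ (i j : Fin n), 2 ≤ |(i : ℤ) - (j : ℤ)| → ∀ x : K, r i (r j (r i (r j x))) = x
  conn : ∀ x y : K, ConnRel r x y

/-- A premaniplex of rank `n` (fixed points allowed, connectivity not required). -/
structure IsPremaniplex {K : Type*} (n : ℕ) (r : Fin n → K → K) : Prop where
  invol : ∀ i, Function.Involutive (r i)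
  sq : ∀ (i j : Fin n), 2 ≤ |(i : ℤ) - (j : ℤ)| → ∀ x : K, r i (r j (r i (r j x))) = x

/-- The automorphism group: permutations of the flags commuting with every monodromy. -/
def autGroup {K : Type*} {n : ℕ} (r : Fin n → K → K) : Subgroup (Equiv.Perm K) where
  carrier := {τ : Equiv.Perm K | ∀ (i : Fin n) (x : K), τ (r i x) = r i (τ x)}
  one_mem' := by intro i x; rfl
  mul_mem' := by
    intro a b ha hb i x
    simp only [Set.mem_setOf_eq] at ha hb ⊢
    simp only [Equiv.Perm.mul_apply]
    rw [hb i x, ha i (b x)]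
  inv_mem' := by
    intro a ha i x
    simp only [Set.mem_setOf_eq] at ha ⊢
    have h := ha i (a⁻¹ x)
    rw [show a (a⁻¹ x) = x from a.apply_symm_apply x] at h
    rw [← h]
    exact a.symm_apply_apply _

/-- A pre-extender: an involutory permutation `rn` of the flags of the `n`-maniplex `(K, r)`
commuting with `r_0, …, r_{n-2}`. -/
structure IsPreExtender {K : Type*} {n : ℕ} (r : Fin n → K → K) (rn : K → K) : Prop where
  maniplex : IsManiplex n r
  rn_invol : Function.Involutive rn
  rn_comm : ∀ i : Fin n, (i : ℕ) + 1 < n → ∀ x : K, rn (r i x) = r i (rn x)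

/-- A Cayley extender `(K, rn, ξ)` with voltage group `G`; the voltage is encoded as a
function on flags which is constant on facets. -/
structure IsCayleyExtender {K : Type*} {G : Type*} [Group G] {n : ℕ}
    (r : Fin n → K → K) (rn : K → K) (ξ : K → G) : Prop where
  maniplex : IsManiplex n r
  rn_invol : Function.Involutive rn
  rn_comm : ∀ i : Fin n, (i : ℕ) + 1 < n → ∀ x : K, rn (r i x) = r i (rn x)
  const : ∀ Φ Ψ : K, FacetRel r Φ Ψ → ξ Φ = ξ Ψ
  voltage_inv : ∀ Φ : K, ξ (rn Φ) = (ξ Φ)⁻¹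

/-- A Cayley coextender `(K, r_{-1}, ξ')` with voltage group `G'`; the voltage is encoded as
a function on flags which is constant on vertices. -/
structure IsCayleyCoextender {K : Type*} {G' : Type*} [Group G'] {n : ℕ}
    (r : Fin n → K → K) (rm : K → K) (ξ' : K → G') : Prop where
  maniplex : IsManiplex n r
  rm_invol : Function.Involutive rm
  rm_comm : ∀ i : Fin n, 1 ≤ (i : ℕ) → ∀ x : K, rm (r i x) = r i (rm x)
  const : ∀ Φ Ψ : K, VertexRel r Φ Ψ → ξ' Φ = ξ' Ψ
  voltage_inv : ∀ Φ : K, ξ' (rm Φ) = (ξ' Φ)⁻¹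

/-- Monodromies of the derived graph `K_{rn}^ξ` on flag set `K × G`. -/
def derivedMono {K : Type*} {G : Type*} [Group G] {n : ℕ}
    (r : Fin n → K → K) (rn : K → K) (ξ : K → G) : Fin (n + 1) → K × G → K × G :=
  fun i p =>
    if h : (i : ℕ) < n then (r ⟨(i : ℕ), h⟩ p.1, p.2) else (rn p.1, ξ p.1 * p.2)

/-- Monodromies of the derived graph `K_{r_{-1}}^{ξ'}` of a coextender, on flag set `K × G'`. -/
def coderivedMono {K : Type*} {G' : Type*} [Group G'] {n : ℕ}
    (r : Fin n → K → K) (rm : K → K) (ξ' : K → G') : Fin (n + 1) → K × G' → K × G' :=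
  fun i p =>
    if _h : (i : ℕ) = 0 then (rm p.1, ξ' p.1 * p.2)
    else (r ⟨(i : ℕ) - 1, by have := i.isLt; omega⟩ p.1, p.2)

/-- Monodromies of the flat amalgamation, on flag set `K × G' × G`. -/
def amalgMono {K : Type*} {G' : Type*} {G : Type*} [Group G'] [Group G] {n : ℕ}
    (r : Fin n → K → K) (rm : K → K) (rn : K → K) (ξ' : K → G') (ξ : K → G) :
    Fin (n + 2) → K × G' × G → K × G' × G :=
  fun i p =>
    if _h0 : (i : ℕ) = 0 then (rm p.1, ξ' p.1 * p.2.1, p.2.2)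
    else if _hn : (i : ℕ) = n + 1 then (rn p.1, p.2.1, ξ p.1 * p.2.2)
    else (r ⟨(i : ℕ) - 1, by have := i.isLt; omega⟩ p.1, p.2.1, p.2.2)

/-- The path intersection property characterizing flag graphs of polytopes. -/
def IsPolytopal {K : Type*} {m : ℕ} (t : Fin m → K → K) : Prop :=
  ∀ (x y : K) (k l : ℕ), k ≤ l → l < m →
    ReachOn t (fun i => k ≤ (i : ℕ)) x y →
    ReachOn t (fun i => (i : ℕ) ≤ l) x y →
    ReachOn t (fun i => k ≤ (i : ℕ) ∧ (i : ℕ) ≤ l) x y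

/-- `S` is an `(rn, rn')`-friendly set: for every flag `Φ` and `τ ∈ S` there is `σ ∈ S`
with `rn'(Φτ) = (rn Φ)σ` (automorphisms act on the right, i.e. by function application). -/
def FriendlySet {K : Type*} (rn rn' : K → K) (S : Set (Equiv.Perm K)) : Prop :=
  ∀ Φ : K, ∀ τ ∈ S, ∃ σ ∈ S, rn' (τ Φ) = σ (rn Φ)

/-- `♥(K, rn)`: the union of all `rn`-friendly subsets of `Aut(K)`. -/
def heartSet {K : Type*} {n : ℕ} (r : Fin n → K → K) (rn : K → K) : Set (Equiv.Perm K) :=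
  ⋃₀ {S : Set (Equiv.Perm K) | S ⊆ ↑(autGroup r) ∧ FriendlySet rn rn S}

/-- Relations of the universal voltage group `G(K, rn)`: one generator per flag, generators of
flags in the same facet are identified, and `α_F · α_{rn F} = 1`. -/
def UnivRels {K : Type*} {n : ℕ} (r : Fin n → K → K) (rn : K → K) : Set (FreeGroup K) :=
  {w | ∃ Φ Ψ : K, FacetRel r Φ Ψ ∧ w = FreeGroup.of Φ * (FreeGroup.of Ψ)⁻¹} ∪
    {w | ∃ Φ : K, w = FreeGroup.of Φ * FreeGroup.of (rn Φ)}

/-- The universal voltage assignment `Φ ↦ α_{F_Φ}` into `G(K, rn)`. -/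
def univVoltage {K : Type*} {n : ℕ} (r : Fin n → K → K) (rn : K → K) :
    K → PresentedGroup (UnivRels r rn) :=
  fun Φ => PresentedGroup.of Φ


section Helpers

variable {K M G : Type*}

lemma reachOn_map {k : ℕ} {r : Fin k → K → K} {t : Fin k → M → M}
    {P : Fin k → Prop} (e : K → M) (he : ∀ i x, e (r i x) = t i (e x))
    {x y : K} (h : ReachOn r P x y) : ReachOn t P (e x) (e y) := by
  induction h with
  | refl => exact Relation.ReflTransGen.refl
  | tail _ hstep ih =>
    obtain ⟨i, hi, hxy⟩ := hstep
    exact Relation.ReflTransGen.tail ih ⟨i, hi, by rw [← he, hxy]⟩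

lemma reachOn_symm {k : ℕ} {r : Fin k → K → K} {P : Fin k → Prop}
    (hinv : ∀ i, Function.Involutive (r i)) {x y : K} (h : ReachOn r P x y) :
    ReachOn r P y x := by
  induction h with
  | refl => exact Relation.ReflTransGen.refl
  | tail _ hstep ih =>
    obtain ⟨i, hi, hxy⟩ := hstep
    exact Relation.ReflTransGen.head ⟨i, hi, by rw [← hxy, hinv i]⟩ ih

lemma comm_of_sq {k : ℕ} {m : Fin k → M → M}
    (hinv : ∀ i, Function.Involutive (m i))
    (hsq : ∀ (i j : Fin k), 2 ≤ |(i : ℤ) - (j : ℤ)| → ∀ x, m i (m j (m i (m j x))) = x)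
    {i j : Fin k} (hij : 2 ≤ |(i : ℤ) - (j : ℤ)|) (x : M) :
    m i (m j x) = m j (m i x) := by
  have h := hsq i j hij x
  have h1 : m j (m i (m j x)) = m i x := by
    have h2 := congrArg (m i) h
    rwa [hinv i (m j (m i (m j x)))] at h2
  have h3 := congrArg (m j) h1
  rwa [hinv j (m i (m j x))] at h3

lemma isManiplex_map {k : ℕ} {m : Fin k → K → K} {t : Fin k → M → M}
    (e : K ≃ M) (he : ∀ i x, e (m i x) = t i (e x)) (h : IsManiplex k m) :
    IsManiplex k t := by
  have hsymm : ∀ i y, e.symm (t i y) = m i (e.symm y) := by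
    intro i y
    apply e.injective
    rw [Equiv.apply_symm_apply, he, Equiv.apply_symm_apply]
  refine ⟨⟨e h.nonempty.some⟩, ?_, ?_, ?_, ?_, ?_⟩
  · intro i y
    apply e.symm.injective
    rw [hsymm, hsymm, h.invol i]
  · intro i y hy
    exact h.fixfree i (e.symm y) (by rw [← hsymm, hy])
  · intro i j hij y hy
    exact h.fixfree₂ i j hij (e.symm y) (by rw [← hsymm, ← hsymm, hy])
  · intro i j hij y
    apply e.symm.injective
    rw [hsymm, hsymm, hsymm, hsymm, h.sq i j hij]
  · intro x y
    have h2 := reachOn_map (P := fun _ => True) e he (h.conn (e.symm x) (e.symm y))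
    rwa [e.apply_symm_apply, e.apply_symm_apply] at h2

variable [Group G]

lemma derivedMono_lt {n : ℕ} (r : Fin n → K → K) (rn : K → K) (ξ : K → G)
    (i : Fin (n + 1)) (hi : (i : ℕ) < n) (p : K × G) :
    derivedMono r rn ξ i p = (r ⟨i, hi⟩ p.1, p.2) := dif_pos hi

lemma derivedMono_top {n : ℕ} (r : Fin n → K → K) (rn : K → K) (ξ : K → G)
    (i : Fin (n + 1)) (hi : ¬ (i : ℕ) < n) (p : K × G) :
    derivedMono r rn ξ i p = (rn p.1, ξ p.1 * p.2) := dif_neg hi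

lemma derived_facet_snd {n : ℕ} {r : Fin n → K → K} {rn : K → K} {ξ : K → G}
    {p q : K × G} (h : FacetRel (derivedMono r rn ξ) p q) : p.2 = q.2 := by
  induction h with
  | refl => rfl
  | tail _ hstep ih =>
    obtain ⟨i, hi, hpq⟩ := hstep
    rw [derivedMono_lt r rn ξ i (by omega)] at hpq
    rw [ih, ← hpq]

lemma derived_facet_of_conn {n : ℕ} {r : Fin n → K → K} (rn : K → K) (ξ : K → G)
    {a b : K} (h : ConnRel r a b) (g : G) :
    FacetRel (derivedMono r rn ξ) (a, g) (b, g) := by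
  induction h with
  | refl => exact Relation.ReflTransGen.refl
  | tail _ hstep ih =>
    obtain ⟨i, _, hab⟩ := hstep
    refine Relation.ReflTransGen.tail ih ⟨i.castSucc, by simp, ?_⟩
    rw [derivedMono_lt r rn ξ i.castSucc (by simp)]
    have hfin : (⟨((i.castSucc : Fin (n+1)) : ℕ), by simp⟩ : Fin n) = i := by
      ext; simp
    rw [hfin, hab]

end Helpers

/-- `M` is a Cayley extension of `K` by `G` iff `M` is isomorphic to the
derived graph of some Cayley extender `(K, rn, ξ)` with voltage group `G`. -/
theorem statement1 {K M G : Type*} [Group G] {n : ℕ}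
    (r : Fin n → K → K) (hK : IsManiplex n r)
    (m : Fin (n + 1) → M → M) (hM : IsManiplex (n + 1) m) :
    ((∀ Φ : M, ∃ f : K → M,
        Function.Injective f ∧
        Set.range f = {Ψ : M | FacetRel m Φ Ψ} ∧
        ∀ (i : Fin n) (x : K), f (r i x) = m i.castSucc (f x)) ∧
      ∃ H : Subgroup (Equiv.Perm M),
        (H : Set (Equiv.Perm M)) ⊆ ↑(autGroup m) ∧
        Nonempty (H ≃* G) ∧
        (∀ Φ Ψ : M, ∃ τ ∈ H, FacetRel m (τ Φ) Ψ) ∧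
        (∀ τ ∈ H, (∃ Φ : M, FacetRel m Φ (τ Φ)) → τ = 1)) ↔
      ∃ (rn : K → K) (ξ : K → G),
        IsCayleyExtender r rn ξ ∧
        IsManiplex (n + 1) (derivedMono r rn ξ) ∧
        ∃ e : M ≃ K × G,
          ∀ (i : Fin (n + 1)) (x : M), e (m i x) = derivedMono r rn ξ i (e x) := by
  constructor
  · -- forward direction
    rintro ⟨hfac, H, hHaut, ⟨θ⟩, htrans, hfree⟩
    classical
    obtain ⟨Φ₀⟩ := hM.nonempty
    obtain ⟨f₀, hf₀inj, hf₀range, hf₀comm⟩ := hfac Φ₀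
    have haut : ∀ τ ∈ H, ∀ (i : Fin (n + 1)) (x : M), τ (m i x) = m i (τ x) :=
      fun τ hτ => hHaut hτ
    have hfmap : ∀ τ ∈ H, ∀ {a b : M}, FacetRel m a b → FacetRel m (τ a) (τ b) :=
      fun τ hτ _ _ h => reachOn_map τ (haut τ hτ) h
    have hΦ₀y : ∀ y : K, FacetRel m Φ₀ (f₀ y) := by
      intro y
      have h := Set.mem_range_self (f := f₀) y
      rwa [hf₀range] at h
    have huniq : ∀ (τ τ' : Equiv.Perm M) (y y' : K), τ ∈ H → τ' ∈ H →
        τ (f₀ y) = τ' (f₀ y') → τ = τ' ∧ y = y' := by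
      intro τ τ' y y' hτ hτ' heq
      have hσmem : τ'⁻¹ * τ ∈ H := H.mul_mem (H.inv_mem hτ') hτ
      have hσ : (τ'⁻¹ * τ) (f₀ y) = f₀ y' := by
        simp only [Equiv.Perm.mul_apply, heq, show τ'⁻¹ (τ' (f₀ y')) = f₀ y' from τ'.symm_apply_apply (f₀ y')]
      have h1 : FacetRel m ((τ'⁻¹ * τ) Φ₀) (f₀ y') := by
        have h := hfmap _ hσmem (hΦ₀y y)
        rwa [hσ] at h
      have h2 : FacetRel m Φ₀ ((τ'⁻¹ * τ) Φ₀) :=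
        Relation.ReflTransGen.trans (hΦ₀y y') (reachOn_symm hM.invol h1)
      have h3 : τ'⁻¹ * τ = 1 := hfree _ hσmem ⟨Φ₀, h2⟩
      have hττ' : τ' = τ := by rwa [inv_mul_eq_one] at h3
      refine ⟨hττ'.symm, hf₀inj (τ.injective ?_)⟩
      rw [heq, hττ']
    have hex : ∀ Ψ : M, ∃ p : Equiv.Perm M × K, p.1 ∈ H ∧ p.1 (f₀ p.2) = Ψ := by
      intro Ψ
      obtain ⟨τ, hτ, hrel⟩ := htrans Φ₀ Ψ
      have h1 : FacetRel m Φ₀ (τ⁻¹ Ψ) := by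
        have h := hfmap _ (H.inv_mem hτ) hrel
        rwa [show τ⁻¹ (τ Φ₀) = Φ₀ from τ.symm_apply_apply Φ₀] at h
      have h2 : τ⁻¹ Ψ ∈ Set.range f₀ := by rw [hf₀range]; exact h1
      obtain ⟨y, hy⟩ := h2
      exact ⟨(τ, y), hτ, by rw [hy, show τ (τ⁻¹ Ψ) = Ψ from τ.apply_symm_apply Ψ]⟩
    choose D hDH hDspec using hex
    have hDeq : ∀ (Ψ : M) (τ : Equiv.Perm M) (y : K), τ ∈ H → τ (f₀ y) = Ψ →
        D Ψ = (τ, y) := by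
      intro Ψ τ y hτ hy
      obtain ⟨h1, h2⟩ := huniq (D Ψ).1 τ (D Ψ).2 y (hDH Ψ) hτ (by rw [hDspec Ψ, hy])
      exact Prod.ext h1 h2
    set L : Fin (n + 1) := Fin.last n with hLdef
    let σf : K → Equiv.Perm M := fun x => (D (m L (f₀ x))).1
    let rn : K → K := fun x => (D (m L (f₀ x))).2
    have σmem : ∀ x, σf x ∈ H := fun x => hDH _
    let ξf : K → G := fun x => (θ ⟨σf x, σmem x⟩)⁻¹
    have hkey : ∀ x, σf x (f₀ (rn x)) = m L (f₀ x) := fun x => hDspec _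
    have hcomm : ∀ (i : Fin n), (i : ℕ) + 1 < n → ∀ z : M,
        m L (m i.castSucc z) = m i.castSucc (m L z) := by
      intro i hi z
      refine comm_of_sq hM.invol hM.sq ?_ z
      have h1 : ((L : Fin (n+1)) : ℕ) = n := rfl
      have h2 : ((i.castSucc : Fin (n+1)) : ℕ) = (i : ℕ) := rfl
      rw [h1, h2, abs_of_nonneg (by omega)]
      omega
    have hstep : ∀ (i : Fin n), (i : ℕ) + 1 < n → ∀ x,
        σf (r i x) = σf x ∧ rn (r i x) = r i (rn x) := by
      intro i hi x
      have h1 : σf x (f₀ (r i (rn x))) = m L (f₀ (r i x)) := by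
        rw [hf₀comm i x, hcomm i hi, ← hkey x, ← haut (σf x) (σmem x) i.castSucc,
          ← hf₀comm i (rn x)]
      have h2 := hDeq (m L (f₀ (r i x))) (σf x) (r i (rn x)) (σmem x) h1
      constructor
      · show (D (m L (f₀ (r i x)))).1 = σf x
        rw [h2]
      · show (D (m L (f₀ (r i x)))).2 = r i (rn x)
        rw [h2]
    have hinv2 : ∀ x, σf x * σf (rn x) = 1 ∧ rn (rn x) = x := by
      intro x
      have h1 : (σf x * σf (rn x)) (f₀ (rn (rn x))) = f₀ x := by
        rw [Equiv.Perm.mul_apply, hkey (rn x), haut (σf x) (σmem x) L, hkey x, hM.invol L]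
      have h2 := hDeq (f₀ x) _ _ (H.mul_mem (σmem x) (σmem (rn x))) h1
      have h3 := hDeq (f₀ x) 1 x H.one_mem rfl
      have h4 : ((σf x * σf (rn x), rn (rn x)) : Equiv.Perm M × K) = (1, x) :=
        h2.symm.trans h3
      exact ⟨congrArg Prod.fst h4, congrArg Prod.snd h4⟩
      
    have hσinv : ∀ x, σf (rn x) = (σf x)⁻¹ := by
      intro x
      exact (mul_eq_one_iff_inv_eq.mp (hinv2 x).1).symm
    -- the equivalence
    let eFun : M → K × G := fun Ψ => ((D Ψ).2, (θ ⟨(D Ψ).1, hDH Ψ⟩)⁻¹)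
    have heFun : ∀ (Ψ : M) (τ : Equiv.Perm M) (y : K) (hτ : τ ∈ H), τ (f₀ y) = Ψ →
        eFun Ψ = (y, (θ ⟨τ, hτ⟩)⁻¹) := by
      intro Ψ τ y hτ hy
      have h2 := hDeq Ψ τ y hτ hy
      have h3 : (⟨(D Ψ).1, hDH Ψ⟩ : H) = ⟨τ, hτ⟩ := Subtype.ext (congrArg Prod.fst h2)
      show ((D Ψ).2, (θ ⟨(D Ψ).1, hDH Ψ⟩)⁻¹) = (y, (θ ⟨τ, hτ⟩)⁻¹)
      rw [h3]
      exact Prod.ext (congrArg Prod.snd h2) rfl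
    have hbij : Function.Bijective eFun := by
      constructor
      · intro Ψ Ψ' hΨ
        have h1 : (D Ψ).2 = (D Ψ').2 := congrArg Prod.fst hΨ
        have h2 : (θ ⟨(D Ψ).1, hDH Ψ⟩)⁻¹ = (θ ⟨(D Ψ').1, hDH Ψ'⟩)⁻¹ := congrArg Prod.snd hΨ
        have h3 : (⟨(D Ψ).1, hDH Ψ⟩ : H) = ⟨(D Ψ').1, hDH Ψ'⟩ :=
          θ.injective (by rwa [inv_inj] at h2)
        have h4 : (D Ψ).1 = (D Ψ').1 := congrArg Subtype.val h3
        rw [← hDspec Ψ, ← hDspec Ψ', h4, h1]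
      · rintro ⟨y, g⟩
        refine ⟨(θ.symm g⁻¹ : H).1 (f₀ y), ?_⟩
        rw [heFun _ (θ.symm g⁻¹ : H).1 y (θ.symm g⁻¹ : H).2 rfl]
        have h5 : (⟨(θ.symm g⁻¹ : H).1, (θ.symm g⁻¹ : H).2⟩ : H) = θ.symm g⁻¹ := rfl
        rw [h5, MulEquiv.apply_symm_apply, inv_inv]
    let e : M ≃ K × G := Equiv.ofBijective eFun hbij
    have he : ∀ (i : Fin (n + 1)) (x : M), e (m i x) = derivedMono r rn ξf i (e x) := by
      intro i Ψ
      have hy : (D Ψ).1 (f₀ (D Ψ).2) = Ψ := hDspec Ψ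
      have heΨ : e Ψ = ((D Ψ).2, (θ ⟨(D Ψ).1, hDH Ψ⟩)⁻¹) := rfl
      by_cases hi : (i : ℕ) < n
      · have h1 : (D Ψ).1 (f₀ (r ⟨i, hi⟩ (D Ψ).2)) = m i Ψ := by
          have hc : (⟨(i : ℕ), hi⟩ : Fin n).castSucc = i := by ext; rfl
          rw [hf₀comm ⟨(i : ℕ), hi⟩ (D Ψ).2, hc, haut _ (hDH Ψ) i, hy]
        have h2 := heFun (m i Ψ) _ _ (hDH Ψ) h1
        show eFun (m i Ψ) = _
        rw [h2, heΨ, derivedMono_lt r rn ξf i hi]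
      · have hiL : i = L := by
          ext
          have := i.isLt
          have h1 : ((L : Fin (n+1)) : ℕ) = n := rfl
          omega
        subst hiL
        have h1 : ((D Ψ).1 * σf (D Ψ).2) (f₀ (rn (D Ψ).2)) = m L Ψ := by
          rw [Equiv.Perm.mul_apply, hkey (D Ψ).2, haut _ (hDH Ψ) L, hy]
        have h2 := heFun (m L Ψ) _ _ (H.mul_mem (hDH Ψ) (σmem (D Ψ).2)) h1
        show eFun (m L Ψ) = _
        rw [h2, heΨ, derivedMono_top r rn ξf L hi]
        have h3 : (⟨(D Ψ).1 * σf (D Ψ).2, H.mul_mem (hDH Ψ) (σmem (D Ψ).2)⟩ : H)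
            = ⟨(D Ψ).1, hDH Ψ⟩ * ⟨σf (D Ψ).2, σmem (D Ψ).2⟩ := rfl
        rw [h3, map_mul, mul_inv_rev]
    refine ⟨rn, ξf, ⟨hK, fun x => (hinv2 x).2, fun i hi x => (hstep i hi x).2, ?_, ?_⟩,
      isManiplex_map e he hM, e, he⟩
    · intro Φ Ψ hrel
      induction hrel with
      | refl => rfl
      | @tail b c _ hstep' ih =>
        obtain ⟨i, hi, hbc⟩ := hstep'
        rw [ih, ← hbc]
        have h1 : (⟨σf (r i b), σmem (r i b)⟩ : H) = ⟨σf b, σmem b⟩ :=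
          Subtype.ext (hstep i hi b).1
        exact congrArg (fun h : ↥H => (θ h)⁻¹) h1.symm
    · intro x
      show (θ ⟨σf (rn x), σmem (rn x)⟩)⁻¹ = ((θ ⟨σf x, σmem x⟩)⁻¹)⁻¹
      have h1 : (⟨σf (rn x), σmem (rn x)⟩ : H) = (⟨σf x, σmem x⟩ : H)⁻¹ :=
        Subtype.ext (hσinv x)
      rw [h1, map_inv]
  · -- reverse direction
    rintro ⟨rn, ξ, hext, hder, e, he⟩
    classical
    have hsymm : ∀ i y, e.symm (derivedMono r rn ξ i y) = m i (e.symm y) := by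
      intro i y
      apply e.injective
      rw [Equiv.apply_symm_apply, he, Equiv.apply_symm_apply]
    have hfwd : ∀ {Φ Ψ : M}, FacetRel m Φ Ψ →
        FacetRel (derivedMono r rn ξ) (e Φ) (e Ψ) := fun h => reachOn_map e he h
    have hbwd : ∀ {p q : K × G}, FacetRel (derivedMono r rn ξ) p q →
        FacetRel m (e.symm p) (e.symm q) := fun h => reachOn_map e.symm hsymm h
    have hsnd : ∀ {Φ Ψ : M}, (e Ψ).2 = (e Φ).2 → FacetRel m Φ Ψ := by
      intro Φ Ψ h2
      have h1 : FacetRel (derivedMono r rn ξ) ((e Φ).1, (e Φ).2) ((e Ψ).1, (e Ψ).2) := by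
        rw [← h2]
        exact derived_facet_of_conn rn ξ (hK.conn (e Φ).1 (e Ψ).1) (e Ψ).2
      have h3 := hbwd h1
      simpa using h3
    constructor
    · intro Φ
      refine ⟨fun x => e.symm (x, (e Φ).2), ?_, ?_, ?_⟩
      · intro a b hab
        have h := congrArg (fun Ψ => (e Ψ).1) hab
        simpa using h
      · ext Ψ
        simp only [Set.mem_range, Set.mem_setOf_eq]
        constructor
        · rintro ⟨x, rfl⟩
          apply hsnd
          simp
        · intro hΨ
          refine ⟨(e Ψ).1, ?_⟩
          have h2 := derived_facet_snd (hfwd hΨ)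
          have h3 : (((e Ψ).1, (e Φ).2) : K × G) = e Ψ := by rw [h2]
          rw [h3, e.symm_apply_apply]
      · intro i x
        apply e.injective
        rw [he, Equiv.apply_symm_apply, Equiv.apply_symm_apply,
          derivedMono_lt r rn ξ i.castSucc (by simp)]
        have hfin : (⟨((i.castSucc : Fin (n+1)) : ℕ), by simp⟩ : Fin n) = i := by ext; simp
        rw [hfin]
    · -- the subgroup
      let ρ : G → Equiv.Perm M := fun g =>
        (e.trans ((Equiv.refl K).prodCongr (Equiv.mulRight g))).trans e.symm
      have hρ : ∀ g Ψ, ρ g Ψ = e.symm ((e Ψ).1, (e Ψ).2 * g) := fun g Ψ => rfl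
      have hρmul : ∀ g h : G, ρ g * ρ h = ρ (h * g) := by
        intro g h
        ext Ψ
        show ρ g (ρ h Ψ) = ρ (h * g) Ψ
        rw [hρ, hρ, hρ, Equiv.apply_symm_apply, mul_assoc]
      let monHom : G →* Equiv.Perm M := MonoidHom.mk' (fun g => ρ g⁻¹) (by
        intro a b
        show ρ (a * b)⁻¹ = ρ a⁻¹ * ρ b⁻¹
        rw [hρmul, mul_inv_rev])
      have hmonHom : ∀ g, monHom g = ρ g⁻¹ := fun g => rfl
      have hinj : Function.Injective monHom := by
        intro g h hgh
        obtain ⟨Ψ₀⟩ := hM.nonempty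
        have h1 : ρ g⁻¹ Ψ₀ = ρ h⁻¹ Ψ₀ := by rw [← hmonHom, ← hmonHom, hgh]
        rw [hρ, hρ] at h1
        have h2 := congrArg (fun Ψ : M => (e Ψ).2) h1
        simp only [Equiv.apply_symm_apply] at h2
        have h3 : g⁻¹ = h⁻¹ := mul_left_cancel h2
        rwa [inv_inj] at h3
      refine ⟨monHom.range, ?_, ⟨(MonoidHom.ofInjective hinj).symm⟩, ?_, ?_⟩
      · rintro τ ⟨g, rfl⟩
        intro i x
        apply e.injective
        rw [hmonHom, hρ, Equiv.apply_symm_apply, he, he, hρ, Equiv.apply_symm_apply]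
        by_cases hi : (i : ℕ) < n
        · rw [derivedMono_lt r rn ξ i hi, derivedMono_lt r rn ξ i hi]
        · rw [derivedMono_top r rn ξ i hi, derivedMono_top r rn ξ i hi]
          simp [mul_assoc]
      · intro Φ Ψ
        refine ⟨ρ ((e Φ).2⁻¹ * (e Ψ).2), ⟨((e Φ).2⁻¹ * (e Ψ).2)⁻¹, by rw [hmonHom, inv_inv]⟩, ?_⟩
        apply hsnd
        rw [hρ, Equiv.apply_symm_apply]
        simp
      · rintro τ ⟨g, rfl⟩ ⟨Φ, hΦ⟩
        have h2 := derived_facet_snd (hfwd hΦ)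
        rw [hmonHom, hρ, Equiv.apply_symm_apply] at h2
        have h3 : g⁻¹ = 1 := by
          have h4 : (e Φ).2 * 1 = (e Φ).2 * g⁻¹ := by rw [mul_one]; exact h2
          exact (mul_left_cancel h4).symm
        have h4 : g = 1 := by rwa [inv_eq_one] at h3
        rw [h4]
        exact map_one monHom
end

section
/- Let (K, r_n, ξ) be a Cayley extender with voltage group G whose derived graph K_{r_n}^ξ is an (n+1)-maniplex. Then K_{r_n}^ξ is polytopal if and only if both of the following hold: (1) K is polytopal, and (2) for all flags Φ, Ψ of K and every k with 0 ≤ k ≤ n, if (Ψ, 1) lies in the ⟨s_k, …, s_n⟩-orbit of (Φ, 1) in K_{r_n}^ξ, then Ψ lies in the ⟨r_k, …, r_{n−1}⟩-orbit of Φ in K. -/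
section AuxStatement5

variable {K G : Type*} [Group G] {n : ℕ}

theorem reachOn_mono' {K' : Type*} {m : ℕ} {t : Fin m → K' → K'} {P Q : Fin m → Prop}
    (h : ∀ i, P i → Q i) {x y : K'} (hr : ReachOn t P x y) : ReachOn t Q x y := by
  induction hr with
  | refl => exact Relation.ReflTransGen.refl
  | tail _ hstep ih =>
      obtain ⟨i, hi, he⟩ := hstep
      exact ih.tail ⟨i, h i hi, he⟩

theorem reachOn_single' {K' : Type*} {m : ℕ} {t : Fin m → K' → K'} {P : Fin m → Prop}
    {f : K' → K'} (hf : Function.Involutive f)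
    (ht : ∀ i, P i → ∀ p, t i p = f p) {x y : K'} (hr : ReachOn t P x y) :
    y = x ∨ y = f x := by
  induction hr with
  | refl => exact Or.inl rfl
  | tail _ hstep ih =>
      obtain ⟨i, hi, he⟩ := hstep
      rcases ih with h1 | h1
      · right; rw [← he, h1, ht i hi]
      · left; rw [← he, h1, ht i hi, hf]

theorem reachOn_fin_zero {K' : Type*} {t : Fin 0 → K' → K'} {P : Fin 0 → Prop}
    {x y : K'} (hr : ReachOn t P x y) : x = y := by
  induction hr with
  | refl => rfl
  | tail _ hstep ih =>
      obtain ⟨i, _, _⟩ := hstep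
      exact i.elim0

theorem derived_lt (r : Fin n → K → K) (rn : K → K) (ξ : K → G)
    (i : Fin (n + 1)) (h : (i : ℕ) < n) (p : K × G) :
    derivedMono r rn ξ i p = (r ⟨(i : ℕ), h⟩ p.1, p.2) := by
  simp [derivedMono, h]

theorem derived_last (r : Fin n → K → K) (rn : K → K) (ξ : K → G)
    (i : Fin (n + 1)) (h : ¬ (i : ℕ) < n) (p : K × G) :
    derivedMono r rn ξ i p = (rn p.1, ξ p.1 * p.2) := by
  simp [derivedMono, h]

theorem reach_lift (r : Fin n → K → K) (rn : K → K) (ξ : K → G)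
    {P : Fin n → Prop} {Q : Fin (n + 1) → Prop}
    (hPQ : ∀ i : Fin n, P i → Q ⟨(i : ℕ), Nat.lt_succ_of_lt i.isLt⟩)
    {Φ Ψ : K} (hr : ReachOn r P Φ Ψ) (g : G) :
    ReachOn (derivedMono r rn ξ) Q (Φ, g) (Ψ, g) := by
  induction hr with
  | refl => exact Relation.ReflTransGen.refl
  | tail _ hstep ih =>
      obtain ⟨i, hi, he⟩ := hstep
      refine ih.tail ⟨⟨(i : ℕ), Nat.lt_succ_of_lt i.isLt⟩, hPQ i hi, ?_⟩
      rw [derived_lt r rn ξ _ i.isLt]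
      simp only [Fin.eta]
      rw [he]

theorem reach_proj (r : Fin n → K → K) (rn : K → K) (ξ : K → G)
    {Q : Fin (n + 1) → Prop} (hQ : ∀ i, Q i → (i : ℕ) < n)
    {p q : K × G} (hr : ReachOn (derivedMono r rn ξ) Q p q) :
    q.2 = p.2 ∧ ReachOn r (fun j : Fin n => Q (Fin.castSucc j)) p.1 q.1 := by
  induction hr with
  | refl => exact ⟨rfl, Relation.ReflTransGen.refl⟩
  | tail _ hstep ih =>
      obtain ⟨i, hi, he⟩ := hstep
      rw [derived_lt r rn ξ i (hQ i hi)] at he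
      have hcast : Fin.castSucc (⟨(i : ℕ), hQ i hi⟩ : Fin n) = i := Fin.ext (by simp)
      refine ⟨?_, ih.2.tail ⟨⟨(i : ℕ), hQ i hi⟩, by show Q (Fin.castSucc (⟨(i : ℕ), hQ i hi⟩ : Fin n)); rw [hcast]; exact hi, ?_⟩⟩
      · rw [← he]; exact ih.1
      · rw [← he]

theorem reach_transl (r : Fin n → K → K) (rn : K → K) (ξ : K → G)
    {Q : Fin (n + 1) → Prop} {p q : K × G}
    (hr : ReachOn (derivedMono r rn ξ) Q p q) (a : G) :
    ReachOn (derivedMono r rn ξ) Q (p.1, p.2 * a) (q.1, q.2 * a) := by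
  have key : ∀ (i : Fin (n + 1)) (b : K × G),
      derivedMono r rn ξ i (b.1, b.2 * a) =
        ((derivedMono r rn ξ i b).1, (derivedMono r rn ξ i b).2 * a) := by
    intro i b
    by_cases h : (i : ℕ) < n
    · rw [derived_lt r rn ξ i h, derived_lt r rn ξ i h]
    · rw [derived_last r rn ξ i h, derived_last r rn ξ i h]
      simp [mul_assoc]
  induction hr with
  | refl => exact Relation.ReflTransGen.refl
  | tail _ hstep ih =>
      obtain ⟨i, hi, he⟩ := hstep
      refine ih.tail ⟨i, hi, ?_⟩
      rw [key]
      rw [he]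

end AuxStatement5

/-- The derived graph of a Cayley extender is polytopal iff `K` is polytopal
and, whenever `(Ψ,1)` lies in the `⟨s_k, …, s_n⟩`-orbit of `(Φ,1)`, the flag `Ψ` lies in the
`⟨r_k, …, r_{n-1}⟩`-orbit of `Φ`. -/
theorem statement5 {K G : Type*} [Group G] {n : ℕ}
    (r : Fin n → K → K) (rn : K → K) (ξ : K → G)
    (hext : IsCayleyExtender r rn ξ)
    (hman : IsManiplex (n + 1) (derivedMono r rn ξ)) :
    IsPolytopal (derivedMono r rn ξ) ↔
      (IsPolytopal r ∧
        ∀ (Φ Ψ : K) (k : ℕ), k ≤ n →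
          ReachOn (derivedMono r rn ξ) (fun i => k ≤ (i : ℕ)) (Φ, (1 : G)) (Ψ, 1) →
          ReachOn r (fun i => k ≤ (i : ℕ)) Φ Ψ) := by
  constructor
  · intro hpol
    constructor
    · -- K is polytopal
      intro x y k l hkl hln h1 h2
      have H1 : ReachOn (derivedMono r rn ξ) (fun i => k ≤ (i : ℕ)) (x, (1 : G)) (y, 1) :=
        reach_lift r rn ξ (fun i hi => hi) h1 1
      have H2 : ReachOn (derivedMono r rn ξ) (fun i => (i : ℕ) ≤ l) (x, (1 : G)) (y, 1) :=
        reach_lift r rn ξ (fun i hi => hi) h2 1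
      have H := hpol (x, 1) (y, 1) k l hkl (by omega) H1 H2
      have HP := reach_proj r rn ξ
        (Q := fun i => k ≤ (i : ℕ) ∧ (i : ℕ) ≤ l) (fun i hi => by omega) H
      exact reachOn_mono' (fun j hj => by simpa using hj) HP.2
    · -- condition (2)
      intro Φ Ψ k hk h1
      by_cases hn : n = 0
      · subst hn
        have hc : Φ = Ψ := reachOn_fin_zero (hext.maniplex.conn Φ Ψ)
        subst hc
        exact Relation.ReflTransGen.refl
      · have hn1 : 1 ≤ n := Nat.one_le_iff_ne_zero.mpr hn
        have hconn : ReachOn (derivedMono r rn ξ) (fun i => (i : ℕ) ≤ n - 1)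
            (Φ, (1 : G)) (Ψ, 1) :=
          reach_lift r rn ξ (P := fun _ => True)
            (fun i _ => by simpa using Nat.le_sub_one_of_lt i.isLt)
            (hext.maniplex.conn Φ Ψ) 1
        by_cases hkn : k < n
        · have H := hpol (Φ, 1) (Ψ, 1) k (n - 1) (by omega) (by omega) h1 hconn
          have HP := reach_proj r rn ξ
            (Q := fun i => k ≤ (i : ℕ) ∧ (i : ℕ) ≤ n - 1) (fun i hi => by omega) H
          exact reachOn_mono' (fun j hj => by simpa using hj.1) HP.2
        · have hkn' : n = k := by omega
          subst hkn'
          -- orbit under s_n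
          have hfn : Function.Involutive
              (derivedMono r rn ξ ⟨n, Nat.lt_succ_self n⟩) := by
            intro p
            rw [derived_last r rn ξ _ (by simp), derived_last r rn ξ _ (by simp)]
            simp only
            rw [hext.voltage_inv, hext.rn_invol p.1, inv_mul_cancel_left]
          have hlast := reachOn_single' hfn
            (fun i hi p => by
              have : i = ⟨n, Nat.lt_succ_self n⟩ := Fin.ext (by
                have := i.isLt; simp at hi ⊢; omega)
              rw [this]) h1
          have hfm : Function.Involutive
              (derivedMono r rn ξ ⟨n - 1, by omega⟩) := by
            intro p
            rw [derived_lt r rn ξ _ (by simpa using Nat.sub_lt hn1 one_pos : ((⟨n-1, by omega⟩ : Fin (n+1)) : ℕ) < n),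
                derived_lt r rn ξ _ (by simpa using Nat.sub_lt hn1 one_pos : ((⟨n-1, by omega⟩ : Fin (n+1)) : ℕ) < n)]
            simp only
            rw [hext.maniplex.invol _ p.1]
          have h1' : ReachOn (derivedMono r rn ξ) (fun i => n - 1 ≤ (i : ℕ))
              (Φ, (1 : G)) (Ψ, 1) := reachOn_mono' (fun i hi => by omega) h1
          have H := hpol (Φ, 1) (Ψ, 1) (n - 1) (n - 1) le_rfl (by omega) h1' hconn
          have hmid := reachOn_single' hfm
            (fun i hi p => by
              have : i = ⟨n - 1, by omega⟩ := Fin.ext (by simp at hi ⊢; omega)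
              rw [this]) H
          rcases hmid with h' | h'
          · have : Ψ = Φ := congrArg Prod.fst h'
            subst this
            exact Relation.ReflTransGen.refl
          · rcases hlast with h'' | h''
            · have : Ψ = Φ := congrArg Prod.fst h''
              subst this
              exact Relation.ReflTransGen.refl
            · exfalso
              have hne : (⟨n - 1, by omega⟩ : Fin (n + 1)) ≠ ⟨n, Nat.lt_succ_self n⟩ := by
                intro hcontra
                have := congrArg Fin.val hcontra
                simp at this; omega
              apply hman.fixfree₂ ⟨n - 1, by omega⟩ ⟨n, Nat.lt_succ_self n⟩ hne (Φ, 1)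
              rw [← h'', h', hfm]
  · rintro ⟨hKpol, hcond⟩
    intro x y k l hkl hl h1 h2
    by_cases hln : l < n
    · obtain ⟨Φ, g⟩ := x
      obtain ⟨Ψ, h⟩ := y
      have hproj := reach_proj r rn ξ (Q := fun i => (i : ℕ) ≤ l)
        (fun i hi => by omega) h2
      have hg : h = g := hproj.1
      subst hg
      have h1' : ReachOn (derivedMono r rn ξ) (fun i => k ≤ (i : ℕ))
          (Φ, (1 : G)) (Ψ, 1) := by
        have := reach_transl r rn ξ h1 h⁻¹
        simpa using this
      have hr1 : ReachOn r (fun i => k ≤ (i : ℕ)) Φ Ψ := hcond Φ Ψ k (by omega) h1'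
      have hr2 : ReachOn r (fun i => (i : ℕ) ≤ l) Φ Ψ :=
        reachOn_mono' (fun j hj => by simpa using hj) hproj.2
      have hres := hKpol Φ Ψ k l hkl hln hr1 hr2
      exact reach_lift r rn ξ (fun i hi => by simpa using hi) hres h
    · have hl' : l = n := by omega
      subst hl'
      refine reachOn_mono' (fun i hi => ⟨hi, ?_⟩) h1
      have := i.isLt
      omega
end
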